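/- Let v¹, …, vᵐ ∈ ℝ² be nonzero vectors such that ‖x‖_N = max_{1 ≤ k ≤ m} |⟨x, vᵏ⟩| defines a norm on ℝ², let 0 < q < 1, and let z¹, z², … be a sequence of points of ℝ² such that ‖z^i − z^j‖_N = (q^i − q^j)/(1−q) for all i < j. Then there exist k ∈ {1, …, m} and a sign σ ∈ {−1, +1} such that ‖z^i − z^j‖_N = σ·⟨z^i − z^j, vᵏ⟩ for all i < j. -/

import Mathlib

/-- The standard Euclidean inner product on the plane. -/
def dot2 (x y : Fin 2 → ℝ) : ℝ := x 0 * y 0 + x 1 * y 1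

/-
Along the sequence the norm is additive: `N (zᵃ − zᶜ) = N (zᵃ − zᵇ) + N (zᵇ − zᶜ)` for
`a < b < c`, since `(qᵃ − qᶜ) = (qᵃ − qᵇ) + (qᵇ − qᶜ)`. The norm is a maximum of the finitely
many functionals `±⟨·, vᵏ⟩`, each bounded above by `N`, so one of them attains `N (z¹ − zⁿ)` for
infinitely many `n`. A functional `φ ≤ N` that attains `N` on a sum `x + y` with
`N (x + y) = N x + N y` must attain it on `x` and on `y`; splitting `z¹ − zⁿ` at the indices
`i < j ≤ n` shows that this one functional attains `N (zⁱ − zʲ)` for every pair.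
-/

section Tight

variable {E : Type*} [AddCommGroup E] (N : E → ℝ) {φ : E →+ ℝ}

theorem eq_and_eq_of_eq_add (hφ : ∀ x, φ x ≤ N x) {x y : E} (hN : N (x + y) = N x + N y)
    (h : φ (x + y) = N (x + y)) : φ x = N x ∧ φ y = N y := by
  have hx := hφ x
  have hy := hφ y
  rw [map_add] at h
  constructor <;> linarith

theorem eq_of_eq_of_le_of_le (hφ : ∀ x, φ x ≤ N x) {z : ℕ → E} {d : ℕ → ℝ}
    (hz : ∀ i j, 1 ≤ i → i < j → N (z i - z j) = d i - d j) {a b i j : ℕ}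
    (ha : 1 ≤ a) (hai : a ≤ i) (hij : i < j) (hjb : j ≤ b)
    (h : φ (z a - z b) = N (z a - z b)) : φ (z i - z j) = N (z i - z j) := by
  have split : ∀ a b c, 1 ≤ a → a < b → b < c → φ (z a - z c) = N (z a - z c) →
      φ (z a - z b) = N (z a - z b) ∧ φ (z b - z c) = N (z b - z c) := by
    intro a b c ha hab hbc h
    apply eq_and_eq_of_eq_add N hφ
    · rw [sub_add_sub_cancel, hz a c ha (hab.trans hbc), hz a b ha hab,
        hz b c (ha.trans hab.le) hbc]
      ring
    · rwa [sub_add_sub_cancel]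
  have hi : φ (z i - z b) = N (z i - z b) := by
    rcases hai.eq_or_lt with rfl | hlt
    · exact h
    · exact (split a i b ha hlt (hij.trans_le hjb) h).2
  rcases hjb.eq_or_lt with rfl | hlt
  · exact hi
  · exact (split i j b (ha.trans hai) hij hlt hi).1

end Tight

def signedDot (σ : ℝ) (w : Fin 2 → ℝ) : (Fin 2 → ℝ) →+ ℝ :=
  AddMonoidHom.mk' (fun x => σ * dot2 x w) fun x y => by
    simp only [dot2, Pi.add_apply]
    ring

@[simp]
theorem signedDot_apply (σ : ℝ) (w x : Fin 2 → ℝ) : signedDot σ w x = σ * dot2 x w := rfl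

section PolygonalNorm

variable {m : ℕ} {v : Fin m → Fin 2 → ℝ} {N : (Fin 2 → ℝ) → ℝ}

theorem signedDot_le (hNmax : ∀ x, IsGreatest (Set.range fun k => |dot2 x (v k)|) (N x))
    (u : ℤˣ) (k : Fin m) (x : Fin 2 → ℝ) : signedDot (u : ℤ) (v k) x ≤ N x := by
  have hle : |dot2 x (v k)| ≤ N x := (hNmax x).2 ⟨k, rfl⟩
  rcases Int.units_eq_one_or u with rfl | rfl
  · simpa using (le_abs_self _).trans hle
  · simpa using (neg_le_abs _).trans hle

theorem exists_signedDot_eq (hNmax : ∀ x, IsGreatest (Set.range fun k => |dot2 x (v k)|) (N x))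
    (x : Fin 2 → ℝ) : ∃ p : Fin m × ℤˣ, signedDot (p.2 : ℤ) (v p.1) x = N x := by
  obtain ⟨k, hk⟩ := (hNmax x).1
  rcases abs_cases (dot2 x (v k)) with ⟨h, _⟩ | ⟨h, _⟩
  · exact ⟨(k, 1), by simp [← hk, h]⟩
  · exact ⟨(k, -1), by simp [← hk, h]⟩

end PolygonalNorm

theorem geometric_sequence_has_direction_general (m : ℕ)
    (v : Fin m → (Fin 2 → ℝ))
    (N : (Fin 2 → ℝ) → ℝ)
    (hNmax : ∀ x, IsGreatest (Set.range fun k => |dot2 x (v k)|) (N x))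
    (q : ℝ)
    (z : ℕ → (Fin 2 → ℝ))
    (hz : ∀ i j : ℕ, 1 ≤ i → i < j → N (z i - z j) = (q ^ i - q ^ j) / (1 - q)) :
    ∃ (k : Fin m) (σ : ℝ), (σ = 1 ∨ σ = -1) ∧
      ∀ i j : ℕ, 1 ≤ i → i < j → N (z i - z j) = σ * dot2 (z i - z j) (v k) := by
  have hz' : ∀ i j, 1 ≤ i → i < j → N (z i - z j) = q ^ i / (1 - q) - q ^ j / (1 - q) :=
    fun i j hi hij => (hz i j hi hij).trans (sub_div _ _ _)
  obtain ⟨⟨k, u⟩, hfreq⟩ : ∃ p : Fin m × ℤˣ,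
      ∃ᶠ n in Filter.atTop, signedDot (p.2 : ℤ) (v p.1) (z 1 - z n) = N (z 1 - z n) :=
    Filter.frequently_exists.1 <|
      Filter.Frequently.of_forall fun n => exists_signedDot_eq hNmax (z 1 - z n)
  refine ⟨k, (u : ℤ), by rcases Int.units_eq_one_or u with rfl | rfl <;> simp, ?_⟩
  intro i j hi hij
  obtain ⟨b, hjb, hb⟩ := hfreq.forall_exists_of_atTop j
  exact (eq_of_eq_of_le_of_le N (signedDot_le hNmax u k) hz' le_rfl hi hij hjb hb).symm

/-- For a polygonal norm `N x = max_k |⟨x, vᵏ⟩|` and a sequence `z¹, z², …` with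
`‖zⁱ − zʲ‖_N = (qⁱ − qʲ)/(1−q)` for `i < j`, there is a single `k` and a sign `σ` with
`‖zⁱ − zʲ‖_N = σ⟨zⁱ − zʲ, vᵏ⟩` for all `i < j`. -/
theorem geometric_sequence_has_direction (m : ℕ) (hm : 0 < m)
    (v : Fin m → (Fin 2 → ℝ)) (hv : ∀ k, v k ≠ 0)
    (N : (Fin 2 → ℝ) → ℝ)
    (hNmax : ∀ x, IsGreatest (Set.range fun k => |dot2 x (v k)|) (N x))
    (hNnorm : ∀ x, N x = 0 → x = 0)
    (q : ℝ) (hq0 : 0 < q) (hq1 : q < 1)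
    (z : ℕ → (Fin 2 → ℝ))
    (hz : ∀ i j : ℕ, 1 ≤ i → i < j → N (z i - z j) = (q ^ i - q ^ j) / (1 - q)) :
    ∃ (k : Fin m) (σ : ℝ), (σ = 1 ∨ σ = -1) ∧
      ∀ i j : ℕ, 1 ≤ i → i < j → N (z i - z j) = σ * dot2 (z i - z j) (v k) :=
  geometric_sequence_has_direction_general m v N hNmax q z hz
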